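/- arXiv:1012.5237 — 3 statements merged into one kernel-verified Lean document; each statement's English description precedes it below -/
import Mathlib

section
/- As formal power series in z (with y a parameter), cosh(2y · arsinh(z/2)) = Σ_{k≥0} (∏_{j=0}^{k−1}(y² − j²)) · z^{2k}/(2k)!. Equivalently, the coefficient of z^{2k} in the Taylor expansion of z ↦ cosh(2y · arsinh(z/2)) at 0 equals (1/(2k)!) ∏_{j=0}^{k−1}(y² − j²), and all odd coefficients vanish. -/
/-!
The function `f z = cosh (2 y · arsinh (z / 2))` satisfies `(4 + z²) f'' + z f' = 4 y² f`.
Differentiating this `n` times and evaluating at `0` gives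
`4 f⁽ⁿ⁺²⁾(0) = (4 y² - n²) f⁽ⁿ⁾(0)`, which together with `f(0) = 1`, `f'(0) = 0` yields the
product formula for the even derivatives and kills the odd ones. Since `f` is real analytic,
its Taylor series at `0` is its power series there.
-/

open Finset Real
open scoped ContDiff

section
variable {𝕜 : Type*} [NontriviallyNormedField 𝕜] {f : 𝕜 → 𝕜}

theorem ContDiff.hasDerivAt_iteratedDeriv (hf : ContDiff 𝕜 ∞ f) (n : ℕ) (z : 𝕜) :
    HasDerivAt (iteratedDeriv n f) (iteratedDeriv (n + 1) f z) z := by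
  rw [iteratedDeriv_succ]
  exact (hf.differentiable_iteratedDeriv n (mod_cast ENat.natCast_lt_top n) z).hasDerivAt

theorem iteratedDeriv_ode_of_quadratic_ode (hf : ContDiff 𝕜 ∞ f) {a b c : 𝕜}
    (hode : ∀ z, (a + z ^ 2) * iteratedDeriv 2 f z + b * z * deriv f z + c * f z = 0)
    (n : ℕ) (z : 𝕜) :
    (a + z ^ 2) * iteratedDeriv (n + 2) f z + (2 * n + b) * z * iteratedDeriv (n + 1) f z
      + (n ^ 2 + (b - 1) * n + c) * iteratedDeriv n f z = 0 := by
  induction n generalizing z with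
  | zero => simpa using hode z
  | succ n ih =>
    have hD (k : ℕ) := hf.hasDerivAt_iteratedDeriv k z
    have hzero : HasDerivAt (fun w => (a + w ^ 2) * iteratedDeriv (n + 2) f w
        + (2 * n + b) * w * iteratedDeriv (n + 1) f w
        + (n ^ 2 + (b - 1) * n + c) * iteratedDeriv n f w) 0 z := by
      simpa only [ih] using hasDerivAt_const z (0 : 𝕜)
    have hsum := ((((hasDerivAt_pow 2 z).const_add a).mul (hD (n + 2))).add
      (((hasDerivAt_id' z).const_mul (2 * n + b)).mul (hD (n + 1)))).add
      ((hD n).const_mul (n ^ 2 + (b - 1) * n + c))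
    have := hsum.unique hzero
    push_cast
    linear_combination this
end

theorem hasDerivAt_mul_arsinh_half (c z : ℝ) :
    HasDerivAt (fun z => c * arsinh (z / 2)) (c * (√(1 + (z / 2) ^ 2))⁻¹ / 2) z :=
  ((hasDerivAt_id' z).div_const 2).arsinh.const_mul c |>.congr_deriv (by simp; ring)

theorem cosh_mul_arsinh_half_ode (c z : ℝ) :
    (4 + z ^ 2) * iteratedDeriv 2 (fun z => cosh (c * arsinh (z / 2))) z
      + z * deriv (fun z => cosh (c * arsinh (z / 2))) z
      = c ^ 2 * cosh (c * arsinh (z / 2)) := by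
  have hq : HasDerivAt (fun z : ℝ => 1 + (z / 2) ^ 2) (z / 2) z :=
    ((hasDerivAt_id' z).div_const 2).pow 2 |>.const_add 1 |>.congr_deriv (by ring)
  have hs : HasDerivAt (fun z : ℝ => √(1 + (z / 2) ^ 2)) (z / 2 / (2 * √(1 + (z / 2) ^ 2))) z :=
    hq.sqrt (by positivity)
  have hderiv : deriv (fun z => cosh (c * arsinh (z / 2)))
      = fun z => sinh (c * arsinh (z / 2)) * (c * (√(1 + (z / 2) ^ 2))⁻¹ / 2) :=
    funext fun z => (hasDerivAt_mul_arsinh_half c z).cosh.deriv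
  have hderiv2 : HasDerivAt
      (fun z => sinh (c * arsinh (z / 2)) * (c * (√(1 + (z / 2) ^ 2))⁻¹ / 2)) _ z :=
    (hasDerivAt_mul_arsinh_half c z).sinh.mul ((hs.inv (by positivity)).const_mul c |>.div_const 2)
  rw [iteratedDeriv_succ, iteratedDeriv_one, hderiv, hderiv2.deriv]
  beta_reduce
  have hpos : 0 < √(1 + (z / 2) ^ 2) := by positivity
  have hsq : √(1 + (z / 2) ^ 2) ^ 2 = 1 + (z / 2) ^ 2 := sq_sqrt (by positivity)
  generalize √(1 + (z / 2) ^ 2) = s at hpos hsq ⊢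
  rw [show 4 + z ^ 2 = 4 * s ^ 2 by linear_combination -4 * hsq]
  field_simp
  ring

theorem eq_ite_even_prod_of_recurrence {K : Type*} [Field K] [CharZero K] {d : ℕ → K} {y : K}
    (h0 : d 0 = 1) (h1 : d 1 = 0) (hrec : ∀ n : ℕ, 4 * d (n + 2) = (4 * y ^ 2 - n ^ 2) * d n)
    (n : ℕ) : d n = if Even n then ∏ j ∈ range (n / 2), (y ^ 2 - (j : K) ^ 2) else 0 := by
  induction n using Nat.twoStepInduction with
  | zero => simpa using h0
  | one => simpa using h1
  | more n ih _ =>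
    have hd : d (n + 2) = (y ^ 2 - (n : K) ^ 2 / 4) * d n := by
      linear_combination hrec n / 4
    rw [hd, ih, Nat.add_div_right n two_pos, prod_range_succ]
    by_cases he : Even n
    · obtain ⟨k, rfl⟩ := he
      rw [if_pos ⟨k, rfl⟩, if_pos ⟨k + 1, by ring⟩, ← two_mul, Nat.mul_div_cancel_left k two_pos]
      push_cast
      ring
    · rw [if_neg he, if_neg (by simpa [Nat.even_add] using he), mul_zero]

theorem iteratedDeriv_cosh_mul_arsinh_half_zero (y : ℝ) (n : ℕ) :
    iteratedDeriv n (fun z => cosh (2 * y * arsinh (z / 2))) 0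
      = if Even n then ∏ j ∈ range (n / 2), (y ^ 2 - (j : ℝ) ^ 2) else 0 := by
  have hf : ContDiff ℝ ∞ fun z => cosh (2 * y * arsinh (z / 2)) := by fun_prop
  refine eq_ite_even_prod_of_recurrence
    (d := fun n => iteratedDeriv n (fun z => cosh (2 * y * arsinh (z / 2))) 0) ?_ ?_ (fun n => ?_) n
  · simp
  · simp [iteratedDeriv_one, (hasDerivAt_mul_arsinh_half (2 * y) 0).cosh.deriv]
  · have := iteratedDeriv_ode_of_quadratic_ode hf (a := 4) (b := 1) (c := -(2 * y) ^ 2)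
      (fun z => by linear_combination cosh_mul_arsinh_half_ode (2 * y) z) n 0
    linear_combination this

/-- The Taylor expansion of `z ↦ cosh (2 y · arsinh (z/2))` at `0`:
the coefficient of `z^(2k)` is `(∏_{j<k} (y² - j²)) / (2k)!` and all odd
coefficients vanish. -/
theorem cosh_arsinh_powerSeries (y : ℝ) :
    HasFPowerSeriesAt (fun z : ℝ => Real.cosh (2 * y * Real.arsinh (z / 2)))
      (fun n =>
        (if Even n then
            (∏ j ∈ Finset.range (n / 2), (y ^ 2 - (j : ℝ) ^ 2)) / (n.factorial : ℝ)
          else 0) • ContinuousMultilinearMap.mkPiAlgebraFin ℝ n ℝ) 0 := by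
  have hf : AnalyticAt ℝ (fun z : ℝ => cosh (2 * y * arsinh (z / 2))) 0 := by fun_prop
  have h := hf.hasFPowerSeriesAt
  simp only [iteratedDeriv_cosh_mul_arsinh_half_zero, ite_div, zero_div] at h
  exact h
end

section
/- Let a_j denote 1 if j is even and 2 if j is odd. For every odd integer m and every j ≥ 1, the integer (2j)! divides a_j · ∏_{i=0}^{j−1}(m² − i²). In other words, (a_j/(2j)!) ∏_{i=0}^{j−1}(m² − i²) is an integer. -/
/-!
Since `m² - i² = (m - i)(m + i)`, the product is `m · Q` with `Q` the product of the `2j - 1`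
consecutive integers around `m`. Then `(m + j) Q` is a product of `2j` consecutive integers, hence
divisible by `(2j)!`, while `2j · Q = (2j)! · C(m + j - 1, 2j - 1)`; subtracting, `(2j)! ∣ 2mQ`.
If `j` is even and `m` odd, `C(m + j - 1, 2j - 1)` has even top and odd bottom, so it is even and
already `j Q` is divisible by `(2j)!`.
-/

open Polynomial Nat

theorem prod_range_sq_sub_sq_eq_mul_descPochhammer_eval {R : Type*} [CommRing R] (x : R) (k : ℕ) :
    ∏ i ∈ Finset.range (k + 1), (x ^ 2 - (i : R) ^ 2) =
      x * (descPochhammer R (2 * k + 1)).eval (x + k) := by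
  induction k with
  | zero => simp [sq]
  | succ k ih =>
    rw [Finset.prod_range_succ, ih, show 2 * (k + 1) + 1 = 2 * k + 1 + 1 + 1 by ring,
      descPochhammer_succ_right R (2 * k + 1 + 1), descPochhammer_succ_left R (2 * k + 1)]
    simp only [eval_mul, eval_comp, eval_sub, eval_X, eval_one, eval_natCast]
    push_cast
    rw [show x + ((k : R) + 1) - 1 = x + k by ring]
    ring

namespace Nat

theorem even_choose_of_even_of_odd {n k : ℕ} (hn : Even n) (hk : Odd k) :
    Even (n.choose k) := by
  obtain ⟨k, rfl⟩ : ∃ k', k = k' + 1 := ⟨k - 1, by have := hk.pos; omega⟩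
  rcases n with _ | n
  · simp
  have h : Even ((n + 1).choose (k + 1) * (k + 1)) := add_one_mul_choose_eq n k ▸ hn.mul_right _
  simpa [Nat.even_mul, Nat.not_even_iff_odd.mpr hk] using h

theorem factorial_dvd_add_one_mul_descFactorial (N k : ℕ) :
    (k + 1)! ∣ (N + 1) * N.descFactorial k := by
  rw [← succ_descFactorial_succ]
  exact factorial_dvd_descFactorial _ _

theorem add_one_mul_descFactorial_eq (N k : ℕ) :
    (k + 1) * N.descFactorial k = (k + 1)! * N.choose k := by
  rw [descFactorial_eq_factorial_mul_choose, factorial_succ, mul_assoc]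

theorem factorial_dvd_two_mul_mul_descFactorial (n k : ℕ) :
    (2 * k + 2)! ∣ 2 * (n * (n + k).descFactorial (2 * k + 1)) := by
  have hsucc := factorial_dvd_add_one_mul_descFactorial (n + k) (2 * k + 1)
  have hlen : (2 * k + 2)! ∣ (2 * k + 2) * (n + k).descFactorial (2 * k + 1) :=
    add_one_mul_descFactorial_eq (n + k) (2 * k + 1) ▸ dvd_mul_right _ _
  refine (Nat.dvd_add_right hlen).mp ?_
  rw [show _ + 2 * (n * _) = 2 * ((n + k + 1) * (n + k).descFactorial (2 * k + 1)) by ring]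
  exact hsucc.mul_left 2

theorem factorial_dvd_mul_descFactorial_of_even (n k : ℕ) (h : Even (n + k)) :
    (2 * k + 2)! ∣ n * (n + k).descFactorial (2 * k + 1) := by
  have hsucc := factorial_dvd_add_one_mul_descFactorial (n + k) (2 * k + 1)
  obtain ⟨t, ht⟩ := even_choose_of_even_of_odd h (odd_two_mul_add_one k)
  have hhalf : (2 * k + 2)! ∣ (k + 1) * (n + k).descFactorial (2 * k + 1) := by
    have := add_one_mul_descFactorial_eq (n + k) (2 * k + 1)
    rw [ht] at this
    exact ⟨t, by linarith⟩
  refine (Nat.dvd_add_left hhalf).mp ?_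
  rw [show n * _ + _ = (n + k + 1) * (n + k).descFactorial (2 * k + 1) by ring]
  exact hsucc

end Nat

/-- For every odd integer `m` and every `j ≥ 1`, the integer `(2j)!` divides
`a_j · ∏_{i<j} (m² - i²)`, where `a_j = 1` for even `j` and `2` for odd `j`. -/
theorem factorial_dvd_odd_square_product (m : ℤ) (hm : Odd m) (j : ℕ) (hj : 1 ≤ j) :
    (((2 * j).factorial : ℤ)) ∣
      (if Even j then 1 else 2) * ∏ i ∈ Finset.range j, (m ^ 2 - (i : ℤ) ^ 2) := by
  obtain ⟨k, rfl⟩ : ∃ k, j = k + 1 := ⟨j - 1, by omega⟩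
  set n := m.natAbs
  have hprod : ∏ i ∈ Finset.range (k + 1), (m ^ 2 - (i : ℤ) ^ 2) =
      (n * (n + k).descFactorial (2 * k + 1) : ℕ) := by
    rw [← Int.natAbs_sq, prod_range_sq_sub_sq_eq_mul_descPochhammer_eval, ← Nat.cast_add,
      descPochhammer_eval_eq_descFactorial, Nat.cast_mul]
  rw [hprod, Nat.mul_add_one 2 k]
  split_ifs with hk
  · have hnk : Even (n + k) :=
      (Int.natAbs_odd.mpr hm).add_odd (Nat.not_even_iff_odd.mp (Nat.even_add_one.mp hk))
    simpa using Int.natCast_dvd_natCast.mpr (Nat.factorial_dvd_mul_descFactorial_of_even n k hnk)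
  · exact_mod_cast Nat.factorial_dvd_two_mul_mul_descFactorial n k
end

section
/- Let c be a nonnegative integer and let a_j = 1 if j is even, 2 if j is odd. If for every integer j ≥ 2 the number (a_j/(2j)!) ∏_{i=0}^{j−1}(c − i²) is an integer, then c = 0 or c is the square of an odd integer. -/
/-!
A square `c = m²` with `m` even fails the condition at `j = m`, where the product is exactly
`(2m)!/2`. If `c > 0` is not a square, write `c = q^k v` with `q` prime, `k` odd and `q ∤ v`;
choosing `n ≡ 1 (mod 4v)` with `J(q | n) = -1` gives `J(c | n) = -1`, so some odd prime `p ∣ n`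
has `c` as a quadratic nonresidue. Then `p ∣ (2p)!` divides `a_p ∏_{i<p} (c - i²)`, but `p ∤ a_p`
and `p` divides no factor `c - i²`.
-/

open Finset
open scoped Nat NumberTheorySymbols

theorem Nat.exists_prime_odd_factorization_of_not_isSquare {c : ℕ} (hc : c ≠ 0)
    (hns : ¬ IsSquare c) : ∃ q, q.Prime ∧ Odd (c.factorization q) := by
  obtain ⟨a, b, rfl, ha⟩ := Nat.sq_mul_squarefree c
  have ha1 : a ≠ 1 := by rintro rfl; exact hns ⟨b, by ring⟩
  have ha0 : a ≠ 0 := by rintro rfl; simp at hc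
  have hb0 : b ≠ 0 := by rintro rfl; simp at hc
  obtain ⟨q, hq, hqa⟩ := Nat.exists_prime_and_dvd ha1
  have haq : a.factorization q = 1 :=
    le_antisymm (ha.natFactorization_le_one q) (hq.factorization_pos_of_dvd ha0 hqa)
  refine ⟨q, hq, b.factorization q, ?_⟩
  rw [Nat.factorization_mul (pow_ne_zero 2 hb0) ha0, Finsupp.add_apply, Nat.factorization_pow,
    Finsupp.smul_apply, smul_eq_mul, haq]

theorem jacobiSym_eq_one_of_modEq_one {a n : ℕ} (h : n ≡ 1 [MOD 4 * a]) : J(a | n) = 1 := by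
  have hodd : Odd n := Nat.odd_iff.mpr (Nat.ModEq.of_dvd ⟨2 * a, by ring⟩ h)
  rw [jacobiSym.mod_right' a hodd, h, ← jacobiSym.mod_right' a odd_one, jacobiSym.one_right]

theorem exists_modEq_one_jacobiSym_eq_neg_one {q v : ℕ} (hq : q.Prime) (hqv : ¬ q ∣ v) :
    ∃ n, n ≡ 1 [MOD 4 * v] ∧ J(q | n) = -1 := by
  rcases hq.eq_two_or_odd' with rfl | hq2
  · have hv : Nat.Coprime 8 v :=
      (Nat.Coprime.pow_left 3 ((Nat.prime_two.coprime_iff_not_dvd).mpr hqv) :)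
    -- `n ≡ 5 (mod 8)` is what makes `J(2 | n) = χ₈ n = -1`.
    obtain ⟨n, hn8, hnv⟩ := Nat.chineseRemainder hv 5 1
    have hn4 : n ≡ 1 [MOD 4] := (Nat.ModEq.of_dvd (by norm_num : 4 ∣ 8) hn8 : n ≡ 5 [MOD 4])
    have hn_odd : Odd n := Nat.odd_iff.mpr (Nat.ModEq.of_dvd (by norm_num : 2 ∣ 4) hn4)
    refine ⟨n, (Nat.modEq_and_modEq_iff_modEq_mul (Nat.Coprime.coprime_dvd_left ⟨2, rfl⟩ hv)).mp
      ⟨hn4, hnv⟩, ?_⟩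
    rw [Nat.cast_ofNat, jacobiSym.at_two hn_odd, ZMod.χ₈_nat_mod_eight, show n % 8 = 5 from hn8]
    rfl
  · have := Fact.mk hq
    obtain ⟨b, hb⟩ := FiniteField.exists_nonsquare (F := ZMod q)
      (by rw [ZMod.ringChar_zmod_n]; rintro rfl; exact absurd hq2 (by decide))
    have hco : Nat.Coprime q (4 * v) := by
      refine Nat.Coprime.mul_right ?_ ((hq.coprime_iff_not_dvd).mpr hqv)
      exact (Nat.Coprime.pow_right 2 (Nat.coprime_two_right.mpr hq2) :)
    -- `n ≡ 1 (mod 4)`, so reciprocity turns `J(q | n)` into `J(n | q) = J(b | q) = -1`.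
    obtain ⟨n, hnq, hnv⟩ := Nat.chineseRemainder hco b.val 1
    refine ⟨n, hnv, ?_⟩
    rw [jacobiSym.quadratic_reciprocity_one_mod_four' hq2 (Nat.ModEq.of_dvd ⟨v, rfl⟩ hnv),
      ZMod.nonsquare_iff_jacobiSym_eq_neg_one, Int.cast_natCast,
      (ZMod.natCast_eq_natCast_iff _ _ _).mpr hnq, ZMod.natCast_zmod_val]
    exact hb

theorem exists_prime_ne_two_not_isSquare_zmod {c : ℕ} (hc : c ≠ 0) (hns : ¬ IsSquare c) :
    ∃ p, p.Prime ∧ p ≠ 2 ∧ ¬ IsSquare ((c : ℤ) : ZMod p) := by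
  obtain ⟨q, hq, hk⟩ := Nat.exists_prime_odd_factorization_of_not_isSquare hc hns
  obtain ⟨n, hn, hqn⟩ := exists_modEq_one_jacobiSym_eq_neg_one hq (Nat.not_dvd_ordCompl hq hc)
  have hcn : J(c | n) = -1 := by
    rw [← Nat.ordProj_mul_ordCompl_eq_self c q, Nat.cast_mul, jacobiSym.mul_left, Nat.cast_pow,
      jacobiSym.pow_left, hqn, hk.neg_one_pow, jacobiSym_eq_one_of_modEq_one hn, mul_one]
  obtain ⟨p, hp, hpn, hcp⟩ := jacobiSym.eq_neg_one_at_prime_divisor_of_eq_neg_one hcn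
  have := Fact.mk hp
  have hn_odd : Odd n := Nat.odd_iff.mpr (Nat.ModEq.of_dvd ⟨2 * _, by ring⟩ hn)
  refine ⟨p, hp, ?_, ZMod.nonsquare_iff_jacobiSym_eq_neg_one.mp hcp⟩
  rintro rfl
  exact (Nat.not_even_iff_odd.mpr hn_odd) (even_iff_two_dvd.mpr hpn)

theorem isSquare_zmod_of_dvd_prod_sub_sq {p : ℕ} [Fact p.Prime] {ι : Type*} {s : Finset ι}
    {f : ι → ℤ} {c : ℤ} (h : (p : ℤ) ∣ ∏ i ∈ s, (c - f i ^ 2)) : IsSquare (c : ZMod p) := by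
  obtain ⟨i, -, hi⟩ := (Nat.prime_iff_prime_int.mp Fact.out).exists_mem_finset_dvd h
  have hci : ((c - f i ^ 2 : ℤ) : ZMod p) = 0 := (ZMod.intCast_zmod_eq_zero_iff_dvd _ p).mpr hi
  push_cast at hci
  exact ⟨f i, by linear_combination hci⟩

theorem two_mul_prod_range_sq_sub_sq {m : ℕ} (hm : m ≠ 0) :
    2 * ∏ i ∈ range m, ((m : ℤ) ^ 2 - (i : ℤ) ^ 2) = (2 * m)! := by
  have hdesc : ∏ i ∈ range m, ((m : ℤ) - i) = m ! := by
    rw [← Nat.descFactorial_self, Nat.descFactorial_eq_prod_range, Nat.cast_prod]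
    exact prod_congr rfl fun i hi => by rw [Nat.cast_sub (mem_range.mp hi).le]
  have hasc : ∏ i ∈ range m, ((m : ℤ) + i) = m.ascFactorial m := by
    rw [Nat.ascFactorial_eq_prod_range, Nat.cast_prod]
    push_cast
    rfl
  obtain ⟨n, rfl⟩ := Nat.exists_eq_succ_of_ne_zero hm
  calc 2 * ∏ i ∈ range (n + 1), (((n + 1 : ℕ) : ℤ) ^ 2 - (i : ℤ) ^ 2)
      = 2 * ((∏ i ∈ range (n + 1), (((n + 1 : ℕ) : ℤ) - i)) *
          ∏ i ∈ range (n + 1), (((n + 1 : ℕ) : ℤ) + i)) := by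
        rw [← prod_mul_distrib]; exact congrArg _ (prod_congr rfl fun i _ => by ring)
    _ = (2 * (n + 1) * (n ! * (n + 1).ascFactorial (n + 1)) : ℕ) := by
        rw [hdesc, hasc, Nat.factorial_succ]; push_cast; ring
    _ = (2 * (n + 1))! := by
        rw [Nat.factorial_mul_ascFactorial, show 2 * (n + 1) = n + (n + 1) + 1 by ring,
          Nat.factorial_succ]

theorem not_factorial_dvd_prod_range_sq_sub_sq {m : ℕ} (hm : m ≠ 0) :
    ¬ ((2 * m)! : ℤ) ∣ ∏ i ∈ range m, ((m : ℤ) ^ 2 - (i : ℤ) ^ 2) := by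
  intro hdvd
  have hprod := two_mul_prod_range_sq_sub_sq hm
  have hfac : (0 : ℤ) < (2 * m)! := by exact_mod_cast (2 * m).factorial_pos
  have := Int.le_of_dvd (by omega) hdvd
  omega

/-- If a nonnegative integer `c` satisfies the Feder–Gitler conditions for all `j ≥ 2`,
i.e. `(2j)!` divides `a_j ∏_{i<j} (c - i²)` with `a_j = 1` for `j` even and `2` for `j` odd,
then `c = 0` or `c` is the square of an odd integer. -/
theorem feder_gitler_stable_converse (c : ℕ)
    (h : ∀ j : ℕ, 2 ≤ j →
      (((2 * j).factorial : ℤ)) ∣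
        (if Even j then 1 else 2) * ∏ i ∈ Finset.range j, ((c : ℤ) - (i : ℤ) ^ 2)) :
    c = 0 ∨ ∃ m : ℤ, Odd m ∧ (c : ℤ) = m ^ 2 := by
  rcases eq_or_ne c 0 with hc | hc
  · exact Or.inl hc
  right
  by_cases hsq : IsSquare c
  · obtain ⟨m, rfl⟩ := hsq
    rcases Nat.even_or_odd m with hm | hm
    · have hm0 : m ≠ 0 := by rintro rfl; simp at hc
      have hdvd := h m (by obtain ⟨t, rfl⟩ := hm; omega)
      rw [if_pos hm, one_mul] at hdvd
      exact absurd (by simpa [sq] using hdvd) (not_factorial_dvd_prod_range_sq_sub_sq hm0)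
    · exact ⟨m, by exact_mod_cast hm, by push_cast; ring⟩
  · obtain ⟨p, hp, hp2, hns⟩ := exists_prime_ne_two_not_isSquare_zmod hc hsq
    have := Fact.mk hp
    have hdvd : (p : ℤ) ∣ (if Even p then 1 else 2) * ∏ i ∈ range p, ((c : ℤ) - (i : ℤ) ^ 2) :=
      (Int.natCast_dvd_natCast.mpr (Nat.dvd_factorial hp.pos (by omega))).trans (h p hp.two_le)
    have hpa : ¬ (p : ℤ) ∣ (if Even p then 1 else 2) := by
      rw [if_neg (hp.even_iff.not.mpr hp2)]
      exact_mod_cast fun h2 => hp2 ((Nat.prime_dvd_prime_iff_eq hp Nat.prime_two).mp h2)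
    exact absurd (isSquare_zmod_of_dvd_prod_sub_sq
      (((Nat.prime_iff_prime_int.mp hp).dvd_or_dvd hdvd).resolve_left hpa)) hns
end
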